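/- Let f : [0,1] → [0,1] be continuous and strictly decreasing with f(0) = 1, and let K ≥ 10 be an integer. Then the supremum, over all instances (all n ≥ 1 and 1 ≥ x_1 ≥ x_2 ≥ … ≥ x_n ≥ 0), of the regret of the best-only pricing curve with threshold f is equal to the supremum of the same quantity restricted to instances with n ≥ K and x_n ≥ f(1). -/

import Mathlib

open MeasureTheory

/-- The value received by the best-only pricing-curve algorithm with threshold function `f`
on the instance `x`, when value `x i` arrives at time `t i`: it accepts (and receives) the
value `x i` with the smallest arrival time among all indices `i` satisfying both
`x i ≥ f (t i)` and `x i > x j` for every `j` arriving before `i`; it receives `0` if no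
index qualifies. -/
noncomputable def bestOnlyReceived {n : ℕ} (f : ℝ → ℝ) (x t : Fin n → ℝ) : ℝ :=
  if h : (Finset.univ.filter fun i : Fin n =>
      f (t i) ≤ x i ∧ ∀ j, t j < t i → x j < x i).Nonempty then
    x (Classical.choose (Finset.exists_min_image _ t h))
  else 0

/-- The regret of the best-only pricing curve with threshold function `f` on the instance
`x 0 ≥ x 1 ≥ … ≥ x n`: the top value `x 0` minus the expected received value, where the
arrival times are i.i.d. uniform on `[0,1]`. -/
noncomputable def bestOnlyRegret {n : ℕ} (f : ℝ → ℝ) (x : Fin (n + 1) → ℝ) : ℝ :=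
  x 0 - ∫ t in Set.univ.pi (fun _ : Fin (n + 1) => Set.Icc (0 : ℝ) 1), bestOnlyReceived f x t

/-!
Pad an instance with values `f 1` and raise every value below `f 1` to `f 1`. The top value can
only grow, and for almost every arrival-time vector (distinct times, all `< 1`) the received value
does not change: since `f t > f 1` for `t < 1`, a value `≤ f 1` is never accepted, and it never
blocks a value that is accepted. The received value of the padded instance thus depends only on
the original coordinates, and integrating out the added ones gives the same expected value.
-/

open Function

section Marginal

variable {α ι κ ι' E : Type*} [Fintype ι] [Fintype κ] [Fintype ι'] [MeasurableSpace α]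
  [NormedAddCommGroup E] [NormedSpace ℝ E]

theorem integral_pi_comp_sumInl (μ : Measure α) [IsProbabilityMeasure μ] (e : ι ⊕ κ ≃ ι')
    (g : (ι → α) → E) :
    ∫ t, g (fun i => t (e (.inl i))) ∂Measure.pi (fun _ : ι' => μ) =
      ∫ u, g u ∂Measure.pi (fun _ : ι => μ) := by
  let Φ := (MeasurableEquiv.sumPiEquivProdPi fun _ : ι ⊕ κ => α).symm.trans
    (MeasurableEquiv.piCongrLeft (fun _ => α) e)
  have hΦ : MeasurePreserving Φ ((Measure.pi fun _ : ι => μ).prod (Measure.pi fun _ : κ => μ))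
      (Measure.pi fun _ => μ) :=
    (measurePreserving_piCongrLeft (fun _ => μ) e).comp
      (measurePreserving_sumPiEquivProdPi_symm fun _ => μ)
  have hΦ_inl (p : (ι → α) × (κ → α)) (i : ι) : Φ p (e (.inl i)) = p.1 i :=
    Equiv.piCongrLeft_sumInl (fun _ => α) e p.1 p.2 i
  rw [← hΦ.integral_comp' (g := fun t => g fun i => t (e (.inl i)))]
  simp only [hΦ_inl, integral_fun_fst, probReal_univ, one_smul]

end Marginal

section UnitCube

variable {ι κ ι' E : Type*} [Fintype ι] [Fintype κ] [Fintype ι'] [NormedAddCommGroup E]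
  [NormedSpace ℝ E]

theorem ae_injective_volume_pi : ∀ᵐ t : ι → ℝ, Injective t := by
  classical
  have hne (i j : ι) (hij : i ≠ j) : ∀ᵐ t : ι → ℝ, t i ≠ t j := by
    have hker : {t : ι → ℝ | t i ≠ t j}ᶜ =
        LinearMap.ker (LinearMap.proj (R := ℝ) (φ := fun _ : ι => ℝ) i - LinearMap.proj j) := by
      ext t
      simp [sub_eq_zero]
    rw [Filter.Eventually, mem_ae_iff, hker]
    refine Measure.addHaar_submodule _ _ fun htop => ?_
    have h := congrArg (· (Pi.single i (1 : ℝ))) (LinearMap.ker_eq_top.1 htop)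
    simp [hij] at h
  refine ae_all_iff.2 fun i => ae_all_iff.2 fun j => ?_
  by_cases hij : i = j
  · exact .of_forall fun _ _ => hij
  · exact (hne i j hij).mono fun t ht h => absurd h ht

theorem ae_injective_and_mem_Ico_unitCube :
    ∀ᵐ t ∂volume.restrict (Set.univ.pi fun _ : ι => Set.Icc (0 : ℝ) 1),
      Injective t ∧ ∀ i, t i ∈ Set.Ico 0 1 := by
  have hne_one : ∀ᵐ t : ι → ℝ, ∀ i, t i ≠ 1 :=
    ae_all_iff.2 fun i => Measure.ae_eval_ne _ i 1
  filter_upwards [ae_restrict_of_ae ae_injective_volume_pi, ae_restrict_of_ae hne_one,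
    ae_restrict_mem (MeasurableSet.univ_pi fun _ => measurableSet_Icc)] with t ht hne hcube
  exact ⟨ht, fun i => ⟨(hcube i trivial).1, (hcube i trivial).2.lt_of_ne (hne i)⟩⟩

theorem setIntegral_unitCube_comp_sumInl (e : ι ⊕ κ ≃ ι') (g : (ι → ℝ) → E) :
    ∫ t in Set.univ.pi (fun _ : ι' => Set.Icc (0 : ℝ) 1), g (fun i => t (e (.inl i))) =
      ∫ u in Set.univ.pi (fun _ : ι => Set.Icc (0 : ℝ) 1), g u := by
  have : IsProbabilityMeasure (volume.restrict (Set.Icc (0 : ℝ) 1)) := ⟨by simp⟩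
  simp only [volume_pi, Measure.restrict_pi_pi]
  exact integral_pi_comp_sumInl _ e g

end UnitCube

namespace BestOnly

variable {n : ℕ}

def IsAccepted (f : ℝ → ℝ) (x t : Fin n → ℝ) (i : Fin n) : Prop :=
  f (t i) ≤ x i ∧ ∀ j, t j < t i → x j < x i

/-- The finset of accepted indices, spelled out (rather than filtered by `IsAccepted`) so that it
is syntactically the one in `bestOnlyReceived`. -/
noncomputable def acceptedSet (f : ℝ → ℝ) (x t : Fin n → ℝ) : Finset (Fin n) :=
  Finset.univ.filter fun i => f (t i) ≤ x i ∧ ∀ j, t j < t i → x j < x i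

theorem mem_acceptedSet {f : ℝ → ℝ} {x t : Fin n → ℝ} {i : Fin n} :
    i ∈ acceptedSet f x t ↔ IsAccepted f x t i := by
  simp [acceptedSet, IsAccepted]

theorem bestOnlyReceived_eq_of_isAccepted {f : ℝ → ℝ} {x t : Fin n → ℝ} (ht : Injective t)
    {i : Fin n} (hi : IsAccepted f x t i) (hmin : ∀ j, IsAccepted f x t j → t i ≤ t j) :
    bestOnlyReceived f x t = x i := by
  have hne : (acceptedSet f x t).Nonempty := ⟨i, mem_acceptedSet.2 hi⟩
  rw [show bestOnlyReceived f x t = x (Classical.choose (Finset.exists_min_image _ t hne))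
    from dif_pos hne]
  obtain ⟨hk, hkmin⟩ := Classical.choose_spec (Finset.exists_min_image _ t hne)
  generalize Classical.choose _ = k at hk hkmin ⊢
  rw [ht ((hmin k (mem_acceptedSet.1 hk)).antisymm' (hkmin i (mem_acceptedSet.2 hi)))]

theorem bestOnlyReceived_eq_zero {f : ℝ → ℝ} {x t : Fin n → ℝ}
    (h : ∀ i, ¬ IsAccepted f x t i) : bestOnlyReceived f x t = 0 := by
  rw [bestOnlyReceived, dif_neg]
  rintro ⟨i, hi⟩
  exact h i (mem_acceptedSet.1 hi)

section Padding

variable {m : ℕ} {f : ℝ → ℝ} {c : ℝ} {σ : Fin n → Fin m} {x : Fin n → ℝ} {y t : Fin m → ℝ}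

theorem isAccepted_pad_iff (hc : ∀ j, c < f (t j)) (hyσ : ∀ i, y (σ i) = max (x i) c)
    (hy : ∀ j, j ∉ Set.range σ → y j ≤ c) (i : Fin n) :
    IsAccepted f y t (σ i) ↔ IsAccepted f x (t ∘ σ) i := by
  have hthreshold : f (t (σ i)) ≤ y (σ i) ↔ f (t (σ i)) ≤ x i := by
    rw [hyσ, le_max_iff, or_iff_left (hc (σ i)).not_ge]
  rw [IsAccepted, IsAccepted, hthreshold]
  refine and_congr_right fun hfx => ?_
  have hxc : c < x i := (hc _).trans_le hfx
  rw [hyσ, max_eq_left hxc.le]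
  constructor
  · intro h j hj
    exact (max_lt_iff.1 (hyσ j ▸ h (σ j) hj)).1
  · intro h j hj
    by_cases hjσ : j ∈ Set.range σ
    · obtain ⟨j, rfl⟩ := hjσ
      exact hyσ j ▸ max_lt (h j hj) hxc
    · exact (hy j hjσ).trans_lt hxc

theorem not_isAccepted_of_notMem_range (hc : ∀ j, c < f (t j))
    (hy : ∀ j, j ∉ Set.range σ → y j ≤ c) {j : Fin m} (hj : j ∉ Set.range σ) :
    ¬ IsAccepted f y t j :=
  fun h => (h.1.trans (hy j hj)).not_gt (hc j)

theorem bestOnlyReceived_pad (hσ : Injective σ) (ht : Injective t) (hc : ∀ j, c < f (t j))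
    (hyσ : ∀ i, y (σ i) = max (x i) c) (hy : ∀ j, j ∉ Set.range σ → y j ≤ c) :
    bestOnlyReceived f y t = bestOnlyReceived f x (t ∘ σ) := by
  have hrange : ∀ j, IsAccepted f y t j → j ∈ Set.range σ := fun j hj =>
    not_not.1 fun h => not_isAccepted_of_notMem_range hc hy h hj
  by_cases hne : (acceptedSet f x (t ∘ σ)).Nonempty
  · obtain ⟨i, hi, hmin⟩ := Finset.exists_min_image _ (t ∘ σ) hne
    have hi' := mem_acceptedSet.1 hi
    rw [bestOnlyReceived_eq_of_isAccepted (ht.comp hσ) hi' fun j hj =>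
        hmin j (mem_acceptedSet.2 hj),
      bestOnlyReceived_eq_of_isAccepted ht ((isAccepted_pad_iff hc hyσ hy i).2 hi'), hyσ,
      max_eq_left ((hc _).le.trans hi'.1)]
    intro j hj
    obtain ⟨j, rfl⟩ := hrange j hj
    exact hmin j (mem_acceptedSet.2 ((isAccepted_pad_iff hc hyσ hy j).1 hj))
  · have hnone : ∀ i, ¬ IsAccepted f x (t ∘ σ) i := fun i hi => hne ⟨i, mem_acceptedSet.2 hi⟩
    rw [bestOnlyReceived_eq_zero hnone, bestOnlyReceived_eq_zero]
    intro j hj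
    obtain ⟨i, rfl⟩ := hrange j hj
    exact hnone i ((isAccepted_pad_iff hc hyσ hy i).1 hj)

end Padding

section PadInstance

noncomputable def padInstance (x : Fin (n + 1) → ℝ) (c : ℝ) (K : ℕ) : Fin (n + K + 1) → ℝ :=
  fun j => if h : (j : ℕ) < n + 1 then max (x ⟨j, h⟩) c else c

variable {x : Fin (n + 1) → ℝ} {c : ℝ} {K : ℕ}

theorem padInstance_zero : padInstance x c K 0 = max (x 0) c := by
  simp [padInstance]

theorem le_padInstance (j : Fin (n + K + 1)) : c ≤ padInstance x c K j := by
  unfold padInstance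
  split_ifs
  exacts [le_max_right _ _, le_rfl]

theorem antitone_padInstance (hx : Antitone x) : Antitone (padInstance x c K) := by
  intro i j hij
  have hij' : (i : ℕ) ≤ j := hij
  unfold padInstance
  split_ifs with hj hi hi
  · exact max_le_max_right c (hx (Fin.mk_le_mk.2 hij'))
  · omega
  · exact le_max_right _ _
  · exact le_rfl

theorem bestOnlyRegret_le_padInstance {f : ℝ → ℝ} (hc : ∀ s ∈ Set.Ico (0 : ℝ) 1, c < f s) :
    bestOnlyRegret f x ≤ bestOnlyRegret f (padInstance x c K) := by
  let e : Fin (n + 1) ⊕ Fin K ≃ Fin (n + K + 1) := finSumFinEquiv.trans (finCongr (by omega))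
  have he (i : Fin (n + 1)) : (e (.inl i) : ℕ) = i := by simp [e]
  have hyσ (i : Fin (n + 1)) : padInstance x c K (e (.inl i)) = max (x i) c := by
    simp only [padInstance, he, Fin.is_lt, dif_pos, Fin.eta]
  have hy (j : Fin (n + K + 1)) (hj : j ∉ Set.range fun i => e (.inl i)) :
      padInstance x c K j ≤ c := by
    rw [padInstance, dif_neg fun h => hj ⟨⟨j, h⟩, Fin.ext (he _)⟩]
  have hreceived : ∫ t in Set.univ.pi (fun _ => Set.Icc (0 : ℝ) 1),
      bestOnlyReceived f (padInstance x c K) t =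
        ∫ u in Set.univ.pi (fun _ => Set.Icc (0 : ℝ) 1), bestOnlyReceived f x u := by
    rw [← setIntegral_unitCube_comp_sumInl e]
    refine integral_congr_ae ?_
    filter_upwards [ae_injective_and_mem_Ico_unitCube] with t ⟨ht, ht_lt⟩
    exact bestOnlyReceived_pad (e.injective.comp Sum.inl_injective) ht (fun j => hc _ (ht_lt j))
      hyσ hy
  rw [bestOnlyRegret, bestOnlyRegret, hreceived, padInstance_zero]
  linarith [le_max_left (x 0) c]

end PadInstance

end BestOnly

theorem bestOnly_regret_sup_restrict_general (f : ℝ → ℝ) (K : ℕ)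
    (hanti : StrictAntiOn f (Set.Icc 0 1))
    (hmap : ∀ t ∈ Set.Icc (0 : ℝ) 1, f t ∈ Set.Icc (0 : ℝ) 1) :
    sSup {r : ℝ | ∃ (n : ℕ) (x : Fin (n + 1) → ℝ),
        Antitone x ∧ x 0 ≤ 1 ∧ 0 ≤ x (Fin.last n) ∧ r = bestOnlyRegret f x}
      = sSup {r : ℝ | ∃ (n : ℕ) (x : Fin (n + 1) → ℝ),
        K ≤ n + 1 ∧ Antitone x ∧ x 0 ≤ 1 ∧ f 1 ≤ x (Fin.last n) ∧ r = bestOnlyRegret f x} := by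
  have h1 : (1 : ℝ) ∈ Set.Icc (0 : ℝ) 1 := ⟨zero_le_one, le_rfl⟩
  have hf1 : f 1 ∈ Set.Icc (0 : ℝ) 1 := hmap 1 h1
  have hlt : ∀ s ∈ Set.Ico (0 : ℝ) 1, f 1 < f s := fun s hs =>
    hanti (Set.Ico_subset_Icc_self hs) h1 hs.2
  apply csSup_eq_csSup_of_forall_exists_le
  · rintro _ ⟨n, x, hx, hx1, -, rfl⟩
    refine ⟨_, ⟨n + K, BestOnly.padInstance x (f 1) K, by omega,
      BestOnly.antitone_padInstance hx, ?_, BestOnly.le_padInstance _, rfl⟩,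
      BestOnly.bestOnlyRegret_le_padInstance hlt⟩
    rw [BestOnly.padInstance_zero]
    exact max_le hx1 hf1.2
  · rintro _ ⟨n, x, -, hx, hx1, hxf, rfl⟩
    exact ⟨_, ⟨n, x, hx, hx1, hf1.1.trans hxf, rfl⟩, le_rfl⟩

/-- For a continuous, strictly decreasing threshold `f : [0,1] → [0,1]` with `f 0 = 1` and
any integer `K ≥ 10`, the supremum of the regret of the best-only pricing curve over all
instances (`n ≥ 1` values in `[0,1]`, sorted decreasingly) equals the supremum restricted
to instances with at least `K` values whose smallest value is at least `f 1`. -/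
theorem bestOnly_regret_sup_restrict (f : ℝ → ℝ) (K : ℕ) (hK : 10 ≤ K)
    (hcont : ContinuousOn f (Set.Icc 0 1)) (hanti : StrictAntiOn f (Set.Icc 0 1))
    (hf0 : f 0 = 1) (hmap : ∀ t ∈ Set.Icc (0 : ℝ) 1, f t ∈ Set.Icc (0 : ℝ) 1) :
    sSup {r : ℝ | ∃ (n : ℕ) (x : Fin (n + 1) → ℝ),
        Antitone x ∧ x 0 ≤ 1 ∧ 0 ≤ x (Fin.last n) ∧ r = bestOnlyRegret f x}
      = sSup {r : ℝ | ∃ (n : ℕ) (x : Fin (n + 1) → ℝ),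
        K ≤ n + 1 ∧ Antitone x ∧ x 0 ≤ 1 ∧ f 1 ≤ x (Fin.last n) ∧ r = bestOnlyRegret f x} :=
  bestOnly_regret_sup_restrict_general f K hanti hmap
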